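/- Let H be a real Hilbert space and let f_1,…,f_k : H → ℝ each be locally Lipschitz near x ∈ H. If x is locally weakly Pareto optimal for (f_1,…,f_k), then 0 ∈ F_ε(x) for every ε ≥ 0. -/

import Mathlib

/-!
If `0` were not in the closed convex hull of the Clarke subdifferentials `∂fᵢ(x)`, a separating
direction `v` would satisfy `⟪w, v⟫ < 0` for all their elements. For locally Lipschitz `fᵢ` the
Clarke derivative `fᵢ°(x; ·)` is sublinear and bounded by a multiple of the norm, so by
Hahn–Banach and Riesz it is attained as `⟪w, v⟫` by some `w ∈ ∂fᵢ(x)`. Hence `fᵢ°(x; v) < 0` for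
every `i`, which makes `v` a common descent direction and contradicts weak Pareto optimality.
Since `∂fᵢ(x) ⊆ ∂_ε fᵢ(x)`, the claim follows for every `ε ≥ 0`.
-/

open Filter Topology RealInnerProductSpace

/-- Clarke generalized directional derivative
`f°(x;v) = limsup_{y→x, t↓0} (f(y+tv) − f(y))/t`. -/
noncomputable def clarkeDir {H : Type*} [NormedAddCommGroup H] [InnerProductSpace ℝ H]
    (f : H → ℝ) (x v : H) : ℝ :=
  limsup (fun p : H × ℝ => (f (p.1 + p.2 • v) - f p.1) / p.2)
    ((𝓝 x) ×ˢ (𝓝[>] (0 : ℝ)))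

/-- Clarke subdifferential, with the dual of `H` identified with `H` via the Riesz map:
`∂f(x) = {w : ⟪w, v⟫ ≤ f°(x;v) for all v}`. -/
def clarkeSubdiff {H : Type*} [NormedAddCommGroup H] [InnerProductSpace ℝ H]
    (f : H → ℝ) (x : H) : Set H :=
  {w : H | ∀ v : H, ⟪w, v⟫ ≤ clarkeDir f x v}

/-- Goldstein ε-subdifferential
`∂_ε f(x) = closure (convexHull (⋃_{y ∈ closedBall x ε} ∂f(y)))`. -/
def goldsteinSubdiff {H : Type*} [NormedAddCommGroup H] [InnerProductSpace ℝ H]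
    (f : H → ℝ) (ε : ℝ) (x : H) : Set H :=
  closure (convexHull ℝ (⋃ y ∈ Metric.closedBall x ε, clarkeSubdiff f y))

/-- `f` is locally Lipschitz near `x`: Lipschitz on some open ball around `x`. -/
def LocallyLipschitzNear {H : Type*} [NormedAddCommGroup H]
    (f : H → ℝ) (x : H) : Prop :=
  ∃ ε > 0, ∃ L : NNReal, LipschitzOnWith L f (Metric.ball x ε)

/-- Multiobjective ε-subdifferential `F_ε(x) = closure (convexHull (⋃ i, ∂_ε f_i(x)))`. -/
def multiSubdiff {H : Type*} [NormedAddCommGroup H] [InnerProductSpace ℝ H]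
    {k : ℕ} (f : Fin k → H → ℝ) (ε : ℝ) (x : H) : Set H :=
  closure (convexHull ℝ (⋃ i : Fin k, goldsteinSubdiff (f i) ε x))

/-- The weak topology on `H`: the topology induced by the functionals `⟪·, v⟫`, `v : H`. -/
noncomputable def weakTopology (H : Type*) [NormedAddCommGroup H] [InnerProductSpace ℝ H] :
    TopologicalSpace H :=
  ⨅ v : H, TopologicalSpace.induced (fun x : H => ⟪x, v⟫) inferInstance

local notation "𝓒[" x "]" => (𝓝 x ×ˢ 𝓝[>] (0 : ℝ))

section Sublinear

theorem exists_linearMap_le_sublinear_eq {E : Type*} [AddCommGroup E] [Module ℝ E] {N : E → ℝ}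
    (hsmul : ∀ c : ℝ, 0 < c → ∀ u, N (c • u) = c * N u) (hadd : ∀ u w, N (u + w) ≤ N u + N w)
    (v : E) : ∃ g : E →ₗ[ℝ] ℝ, (∀ u, g u ≤ N u) ∧ g v = N v := by
  have hN0 : N 0 = 0 := by
    have := hsmul 2 two_pos 0
    rw [smul_zero] at this
    linarith
  have hneg : ∀ u, -N u ≤ N (-u) := fun u => by
    have := hadd u (-u)
    rw [add_neg_cancel, hN0] at this
    linarith
  let g₀ : E →ₗ.[ℝ] ℝ := LinearPMap.mkSpanSingleton' v (N v) fun c hc => by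
    rcases smul_eq_zero.1 hc with rfl | rfl <;> simp [hN0]
  have hg₀N : ∀ z : g₀.domain, g₀ z ≤ N z := by
    rintro ⟨_, hz⟩
    obtain ⟨c, rfl⟩ := Submodule.mem_span_singleton.1 hz
    rw [LinearPMap.mkSpanSingleton'_apply, RingHom.id_apply, smul_eq_mul]
    rcases lt_trichotomy c 0 with hc | rfl | hc
    · calc c * N v = -c * -N v := by ring
        _ ≤ -c * N (-v) := mul_le_mul_of_nonneg_left (hneg v) (by linarith)
        _ = N (c • v) := by rw [← hsmul _ (by linarith), neg_smul_neg]
    · simp [hN0]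
    · rw [hsmul c hc]
  obtain ⟨g, hg₀, hgN⟩ := exists_extension_of_le_sublinear g₀ N hsmul hadd hg₀N
  have hv : v ∈ g₀.domain := Submodule.mem_span_singleton_self v
  exact ⟨g, hgN, (hg₀ ⟨v, hv⟩).trans (LinearPMap.mkSpanSingleton'_apply_self _ _ _ _)⟩

variable {H : Type*} [NormedAddCommGroup H] [InnerProductSpace ℝ H]

theorem exists_inner_le_sublinear_eq [CompleteSpace H] {N : H → ℝ} {C : ℝ}
    (hsmul : ∀ c : ℝ, 0 < c → ∀ u, N (c • u) = c * N u) (hadd : ∀ u w, N (u + w) ≤ N u + N w)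
    (hle : ∀ u, N u ≤ C * ‖u‖) (v : H) : ∃ w : H, (∀ u, ⟪w, u⟫ ≤ N u) ∧ ⟪w, v⟫ = N v := by
  obtain ⟨g, hgN, hgv⟩ := exists_linearMap_le_sublinear_eq hsmul hadd v
  have hg : ∀ u, ‖g u‖ ≤ C * ‖u‖ := fun u => by
    rw [Real.norm_eq_abs, abs_le]
    have := hle (-u)
    rw [norm_neg] at this
    exact ⟨by linarith [hgN (-u), map_neg g u], (hgN u).trans (hle u)⟩
  refine ⟨(InnerProductSpace.toDual ℝ H).symm (g.mkContinuous C hg), fun u => ?_, ?_⟩ <;>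
    rw [InnerProductSpace.toDual_symm_apply, LinearMap.mkContinuous_apply]
  exacts [hgN u, hgv]

theorem zero_mem_closure_convexHull_of_forall_exists_inner_nonneg [CompleteSpace H] {s : Set H}
    (hs : ∀ v, ∃ w ∈ s, 0 ≤ ⟪w, v⟫) : (0 : H) ∈ closure (convexHull ℝ s) := by
  by_contra h0
  obtain ⟨φ, a, hφ, ha⟩ :=
    geometric_hahn_banach_closed_point (convex_convexHull ℝ s).closure isClosed_closure h0
  obtain ⟨w, hw, hwv⟩ := hs ((InnerProductSpace.toDual ℝ H).symm φ)
  rw [real_inner_comm, InnerProductSpace.toDual_symm_apply] at hwv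
  rw [map_zero] at ha
  linarith [hφ w (subset_closure (subset_convexHull ℝ s hw))]

end Sublinear

section DiffQuot

variable {E : Type*} [NormedAddCommGroup E] [NormedSpace ℝ E]

noncomputable def diffQuot (f : E → ℝ) (v : E) (p : E × ℝ) : ℝ :=
  (f (p.1 + p.2 • v) - f p.1) / p.2

theorem tendsto_add_smul_nhds_prod_nhdsGT (x v : E) :
    Tendsto (fun p : E × ℝ => p.1 + p.2 • v) 𝓒[x] (𝓝 x) := by
  have : Tendsto (fun p : E × ℝ => p.1 + p.2 • v) (𝓝 x ×ˢ 𝓝 0) (𝓝 (x + (0 : ℝ) • v)) := by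
    rw [← nhds_prod_eq]
    exact (continuous_fst.add (continuous_snd.smul continuous_const)).tendsto _
  simpa using this.mono_left (prod_mono le_rfl nhdsWithin_le_nhds)

variable {f : E → ℝ} {x : E}

theorem LocallyLipschitzNear.exists_eventually_abs_diffQuot_le (hf : LocallyLipschitzNear f x) :
    ∃ C : ℝ, ∀ v, ∀ᶠ p in 𝓒[x], |diffQuot f v p| ≤ C * ‖v‖ := by
  obtain ⟨δ, hδ, L, hL⟩ := hf
  refine ⟨L, fun v => ?_⟩
  have hball := Metric.ball_mem_nhds x hδ
  filter_upwards [tendsto_fst.eventually_mem hball,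
    (tendsto_add_smul_nhds_prod_nhdsGT x v).eventually_mem hball,
    tendsto_snd.eventually_mem self_mem_nhdsWithin] with p hp hpv (ht : 0 < p.2)
  rw [diffQuot, abs_div, abs_of_pos ht, div_le_iff₀ ht, ← Real.dist_eq]
  calc dist (f (p.1 + p.2 • v)) (f p.1) ≤ L * dist (p.1 + p.2 • v) p.1 :=
        hL.dist_le_mul _ hpv _ hp
    _ = L * ‖v‖ * p.2 := by
        rw [dist_self_add_left, norm_smul, Real.norm_of_nonneg ht.le]
        ring

theorem LocallyLipschitzNear.isBoundedUnder_diffQuot (hf : LocallyLipschitzNear f x) (v : E) :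
    IsBoundedUnder (· ≤ ·) 𝓒[x] (diffQuot f v) ∧ IsBoundedUnder (· ≥ ·) 𝓒[x] (diffQuot f v) := by
  obtain ⟨C, hC⟩ := hf.exists_eventually_abs_diffQuot_le
  exact isBoundedUnder_le_abs.1 ⟨C * ‖v‖, hC v⟩

end DiffQuot

section ClarkeDir

variable {H : Type*} [NormedAddCommGroup H] [InnerProductSpace ℝ H] {f : H → ℝ} {x : H}

theorem clarkeDir_eq_limsup (f : H → ℝ) (x v : H) :
    clarkeDir f x v = limsup (diffQuot f v) 𝓒[x] := rfl

theorem LocallyLipschitzNear.exists_clarkeDir_le (hf : LocallyLipschitzNear f x) :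
    ∃ C : ℝ, ∀ v, clarkeDir f x v ≤ C * ‖v‖ := by
  obtain ⟨C, hC⟩ := hf.exists_eventually_abs_diffQuot_le
  exact ⟨C, fun v => limsup_le_of_le (hf.isBoundedUnder_diffQuot v).2.isCoboundedUnder_le
    ((hC v).mono fun _ h => (abs_le.1 h).2)⟩

theorem LocallyLipschitzNear.clarkeDir_smul_le (hf : LocallyLipschitzNear f x) {c : ℝ}
    (hc : 0 < c) (v : H) : clarkeDir f x (c • v) ≤ c * clarkeDir f x v := by
  set ψ : H × ℝ → H × ℝ := fun p => (p.1, c * p.2)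
  have hψ : Tendsto ψ 𝓒[x] 𝓒[x] :=
    tendsto_fst.prodMk ((tendsto_iff_comap.2 (comap_mulLeft_nhdsGT_zero hc).ge).comp tendsto_snd)
  have hscale : diffQuot f (c • v) = (c * ·) ∘ (diffQuot f v ∘ ψ) := by
    funext p
    simp only [diffQuot, ψ, Function.comp, smul_smul]
    rw [mul_comm p.2 c, mul_div_assoc', mul_div_mul_left _ _ hc.ne']
  have hb := hf.isBoundedUnder_diffQuot v
  have hbψ := hψ.isBoundedUnder_comp hb.1
  have hcobψ := (hψ.isBoundedUnder_comp hb.2).isCoboundedUnder_le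
  calc clarkeDir f x (c • v) = limsup ((c * ·) ∘ (diffQuot f v ∘ ψ)) 𝓒[x] := by
        rw [clarkeDir_eq_limsup, hscale]
    _ = c * limsup (diffQuot f v ∘ ψ) 𝓒[x] :=
        ((monotone_mul_left_of_nonneg hc.le).map_limsup_of_continuousAt _
          (continuous_const_mul c).continuousAt hbψ hcobψ).symm
    _ ≤ c * clarkeDir f x v :=
        mul_le_mul_of_nonneg_left (hψ.limsup_comp_le_limsup hcobψ hb.1) hc.le

theorem LocallyLipschitzNear.clarkeDir_smul (hf : LocallyLipschitzNear f x) {c : ℝ}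
    (hc : 0 < c) (v : H) : clarkeDir f x (c • v) = c * clarkeDir f x v := by
  refine le_antisymm (hf.clarkeDir_smul_le hc v) ?_
  have h := hf.clarkeDir_smul_le (inv_pos.2 hc) (c • v)
  rw [inv_smul_smul₀ hc.ne'] at h
  calc c * clarkeDir f x v ≤ c * (c⁻¹ * clarkeDir f x (c • v)) :=
        mul_le_mul_of_nonneg_left h hc.le
    _ = clarkeDir f x (c • v) := by field_simp

theorem LocallyLipschitzNear.clarkeDir_add_le (hf : LocallyLipschitzNear f x) (u v : H) :
    clarkeDir f x (u + v) ≤ clarkeDir f x u + clarkeDir f x v := by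
  set ψ : H × ℝ → H × ℝ := fun p => (p.1 + p.2 • v, p.2)
  have hψ : Tendsto ψ 𝓒[x] 𝓒[x] := (tendsto_add_smul_nhds_prod_nhdsGT x v).prodMk tendsto_snd
  have hsplit : diffQuot f (u + v) = diffQuot f u ∘ ψ + diffQuot f v := by
    funext p
    simp only [diffQuot, ψ, Function.comp, Pi.add_apply, ← add_div, smul_add]
    congr 1
    abel_nf
  have hu := hf.isBoundedUnder_diffQuot u
  have hv := hf.isBoundedUnder_diffQuot v
  have hcobψ := (hψ.isBoundedUnder_comp hu.2).isCoboundedUnder_le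
  calc clarkeDir f x (u + v) = limsup (diffQuot f u ∘ ψ + diffQuot f v) 𝓒[x] := by
        rw [clarkeDir_eq_limsup, hsplit]
    _ ≤ limsup (diffQuot f u ∘ ψ) 𝓒[x] + clarkeDir f x v :=
        limsup_add_le (hψ.isBoundedUnder_comp hu.2) (hψ.isBoundedUnder_comp hu.1)
          hv.2.isCoboundedUnder_le hv.1
    _ ≤ clarkeDir f x u + clarkeDir f x v :=
        add_le_add_left (hψ.limsup_comp_le_limsup hcobψ hu.1) _

theorem LocallyLipschitzNear.exists_mem_clarkeSubdiff_inner_eq [CompleteSpace H]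
    (hf : LocallyLipschitzNear f x) (v : H) :
    ∃ w ∈ clarkeSubdiff f x, ⟪w, v⟫ = clarkeDir f x v := by
  obtain ⟨C, hC⟩ := hf.exists_clarkeDir_le
  exact exists_inner_le_sublinear_eq (fun _ hc => hf.clarkeDir_smul hc) hf.clarkeDir_add_le hC v

theorem LocallyLipschitzNear.eventually_lt_of_clarkeDir_neg (hf : LocallyLipschitzNear f x)
    {v : H} (hv : clarkeDir f x v < 0) : ∀ᶠ t in 𝓝[>] (0 : ℝ), f (x + t • v) < f x := by
  have hq : ∀ᶠ p in 𝓒[x], diffQuot f v p < 0 :=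
    eventually_lt_of_limsup_lt hv (hf.isBoundedUnder_diffQuot v).1
  filter_upwards [(tendsto_const_nhds.prodMk tendsto_id).eventually hq, self_mem_nhdsWithin]
    with t (ht : diffQuot f v (x, t) < 0) (ht0 : 0 < t)
  have := (div_lt_iff₀ ht0).1 ht
  linarith

theorem exists_zero_le_clarkeDir_of_weakParetoMin {ι : Type*} [Finite ι] {f : ι → H → ℝ}
    (hf : ∀ i, LocallyLipschitzNear (f i) x) {δ : ℝ} (hδ : 0 < δ)
    (hopt : ¬ ∃ x' : H, ‖x' - x‖ < δ ∧ ∀ i, f i x' < f i x) (v : H) :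
    ∃ i, 0 ≤ clarkeDir (f i) x v := by
  by_contra! hneg
  have hdesc : ∀ᶠ t in 𝓝[>] (0 : ℝ), ∀ i, f i (x + t • v) < f i x :=
    eventually_all.2 fun i => (hf i).eventually_lt_of_clarkeDir_neg (hneg i)
  have hnear : ∀ᶠ t in 𝓝[>] (0 : ℝ), x + t • v ∈ Metric.ball x δ := by
    have : Tendsto (fun t : ℝ => x + t • v) (𝓝 0) (𝓝 x) :=
      (continuous_const.add (continuous_id.smul continuous_const)).tendsto' 0 x (by simp)
    exact (this.mono_left nhdsWithin_le_nhds).eventually_mem (Metric.ball_mem_nhds x hδ)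
  obtain ⟨t, htdesc, htnear⟩ := (hdesc.and hnear).exists
  exact hopt ⟨x + t • v, mem_ball_iff_norm.1 htnear, htdesc⟩

theorem clarkeSubdiff_subset_goldsteinSubdiff {ε : ℝ} (hε : 0 ≤ ε) :
    clarkeSubdiff f x ⊆ goldsteinSubdiff f ε x := fun _ hw =>
  subset_closure (subset_convexHull ℝ _ (Set.mem_biUnion (Metric.mem_closedBall_self hε) hw))

theorem closure_convexHull_iUnion_clarkeSubdiff_subset_multiSubdiff {k : ℕ}
    {f : Fin k → H → ℝ} {ε : ℝ} (hε : 0 ≤ ε) :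
    closure (convexHull ℝ (⋃ i, clarkeSubdiff (f i) x)) ⊆ multiSubdiff f ε x :=
  closure_mono <| convexHull_mono <|
    Set.iUnion_mono fun _ => clarkeSubdiff_subset_goldsteinSubdiff hε

end ClarkeDir

/-- If `x` is locally weakly Pareto optimal, then `0 ∈ F_ε(x)` for every `ε ≥ 0`. -/
theorem stmt10 {H : Type*} [NormedAddCommGroup H] [InnerProductSpace ℝ H] [CompleteSpace H]
    {k : ℕ} (f : Fin k → H → ℝ) (x : H)
    (hlip : ∀ i, LocallyLipschitzNear (f i) x)
    (hpareto : ∃ δ > 0, ¬ ∃ x' : H, ‖x' - x‖ < δ ∧ ∀ i, f i x' < f i x) :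
    ∀ ε : ℝ, 0 ≤ ε → (0 : H) ∈ multiSubdiff f ε x := by
  intro ε hε
  obtain ⟨δ, hδ, hopt⟩ := hpareto
  refine closure_convexHull_iUnion_clarkeSubdiff_subset_multiSubdiff hε
    (zero_mem_closure_convexHull_of_forall_exists_inner_nonneg fun v => ?_)
  obtain ⟨i, hi⟩ := exists_zero_le_clarkeDir_of_weakParetoMin hlip hδ hopt v
  obtain ⟨w, hw, hwv⟩ := (hlip i).exists_mem_clarkeSubdiff_inner_eq v
  exact ⟨w, Set.mem_iUnion.2 ⟨i, hw⟩, hwv ▸ hi⟩
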